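/- arXiv:2111.04630 — 4 statements merged into one kernel-verified Lean document; each statement's English description precedes it below -/
import Mathlib

section
/- Let $a,c\in[0,\infty)$, $T\in\mathbb{R}$, $t_0\in(-\infty,T)$, and let $x\colon[t_0,T]\to[0,\infty)$ and $\delta\colon[t_0,T]\to[t_0,T]$ be measurable functions such that for all $t\in[t_0,T]$ it holds that $\delta(t)\le t$ and $x(t)\le a+\int_{t_0}^t c\,x(\delta(s))\,ds<\infty$. Then for all $t\in[t_0,T]$ it holds that $x(t)\le a e^{c(t-t_0)}$. -/
open MeasureTheory Set

/-! The majorant `y t = a + ∫_{t₀}^t c x(δ s) ds` dominates `x` and is nondecreasing, since its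
integrand is nonnegative. Hence `c x(δ s) ≤ c y(δ s) ≤ c y(s)`, so the continuous function `y`
satisfies the classical inequality `y t ≤ a + ∫_{t₀}^t c y(s) ds`. Its right-hand side `w` has
`w' = c y ≤ c w`, and the differential Gronwall inequality gives
`x ≤ y ≤ w ≤ a e^{c (t - t₀)}`. -/

theorem monotoneOn_integral_of_nonneg {f : ℝ → ℝ} {t₀ T : ℝ}
    (hf : ∀ s ∈ Icc t₀ T, 0 ≤ f s) (hfi : IntegrableOn f (Icc t₀ T)) :
    MonotoneOn (fun t => ∫ s in t₀..t, f s) (Icc t₀ T) := by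
  intro u hu v hv huv
  refine intervalIntegral.integral_mono_interval le_rfl hu.1 huv ?_
    ((intervalIntegrable_iff_integrableOn_Icc_of_le hv.1).2
      (hfi.mono_set (Icc_subset_Icc_right hv.2)))
  filter_upwards [ae_restrict_mem measurableSet_Ioc] with s hs
  exact hf s ⟨hs.1.le, hs.2.trans hv.2⟩

theorem hasDerivWithinAt_const_add_integral {f : ℝ → ℝ} {a t₀ T t : ℝ}
    (hf : ContinuousOn f (Icc t₀ T)) (ht : t ∈ Icc t₀ T) :
    HasDerivWithinAt (fun u => a + ∫ s in t₀..u, f s) (f t) (Icc t₀ T) t := by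
  have : Fact (t ∈ Icc t₀ T) := ⟨ht⟩
  refine (intervalIntegral.integral_hasDerivWithinAt_right ?_
    (hf.stronglyMeasurableAtFilter_nhdsWithin measurableSet_Icc t) (hf t ht)).const_add a
  exact (hf.mono (uIcc_subset_Icc ⟨le_rfl, ht.1.trans ht.2⟩ ht)).intervalIntegrable

theorem le_mul_exp_of_le_add_integral {y : ℝ → ℝ} {a c t₀ T : ℝ} (hc : 0 ≤ c)
    (hy : ContinuousOn y (Icc t₀ T))
    (h : ∀ t ∈ Icc t₀ T, y t ≤ a + ∫ s in t₀..t, c * y s) :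
    ∀ t ∈ Icc t₀ T, y t ≤ a * Real.exp (c * (t - t₀)) := by
  set w : ℝ → ℝ := fun t => a + ∫ s in t₀..t, c * y s with hw
  have hw_deriv (t) (ht : t ∈ Icc t₀ T) : HasDerivWithinAt w (c * y t) (Icc t₀ T) t :=
    hasDerivWithinAt_const_add_integral (continuousOn_const.mul hy) ht
  have hw_le : ∀ t ∈ Icc t₀ T, w t ≤ gronwallBound a c 0 (t - t₀) := by
    refine le_gronwallBound_of_liminf_deriv_right_le
      (fun t ht => (hw_deriv t ht).continuousWithinAt)
      (fun t ht r hr => ((hw_deriv t (Ico_subset_Icc_self ht)).mono_of_mem_nhdsWithin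
        (Icc_mem_nhdsGE_of_mem ht)).liminf_right_slope_le hr) (by simp [hw]) ?_
    intro t ht
    rw [add_zero]
    exact mul_le_mul_of_nonneg_left (h t (Ico_subset_Icc_self ht)) hc
  intro t ht
  simpa only [gronwallBound_ε0] using (h t ht).trans (hw_le t ht)

theorem stmt_0_general (a c t₀ T : ℝ) (hc : 0 ≤ c)
    (x δ : ℝ → ℝ)
    (hx_nonneg : ∀ t ∈ Set.Icc t₀ T, 0 ≤ x t)
    (hδ_mem : ∀ t ∈ Set.Icc t₀ T, δ t ∈ Set.Icc t₀ T)
    (hδ_le : ∀ t ∈ Set.Icc t₀ T, δ t ≤ t)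
    (h_int : ∀ t ∈ Set.Icc t₀ T,
      IntegrableOn (fun s => c * x (δ s)) (Set.Icc t₀ t) volume)
    (h_bound : ∀ t ∈ Set.Icc t₀ T,
      x t ≤ a + ∫ s in t₀..t, c * x (δ s)) :
    ∀ t ∈ Set.Icc t₀ T, x t ≤ a * Real.exp (c * (t - t₀)) := by
  intro t ht
  have hT : t₀ ≤ T := ht.1.trans ht.2
  have hfi := h_int T ⟨hT, le_rfl⟩
  set y : ℝ → ℝ := fun t => a + ∫ s in t₀..t, c * x (δ s)
  have hy_mono : MonotoneOn y (Icc t₀ T) :=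
    (monotoneOn_integral_of_nonneg (fun s hs => mul_nonneg hc (hx_nonneg _ (hδ_mem s hs)))
      hfi).const_add a
  have hy_cont : ContinuousOn y (Icc t₀ T) := by
    rw [← uIcc_of_le hT] at hfi ⊢
    exact continuousOn_const.add (intervalIntegral.continuousOn_primitive_interval hfi)
  have hy_le (u) (hu : u ∈ Icc t₀ T) : y u ≤ a + ∫ s in t₀..u, c * y s := by
    refine add_le_add_right (intervalIntegral.integral_mono_on hu.1
      ((intervalIntegrable_iff_integrableOn_Icc_of_le hu.1).2 (h_int u hu))
      ((continuousOn_const.mul (hy_cont.mono (Icc_subset_Icc_right hu.2))).intervalIntegrable_of_Icc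
        hu.1) fun s hs => ?_) a
    have hsT : s ∈ Icc t₀ T := ⟨hs.1, hs.2.trans hu.2⟩
    exact mul_le_mul_of_nonneg_left
      ((h_bound _ (hδ_mem s hsT)).trans (hy_mono (hδ_mem s hsT) hsT (hδ_le s hsT))) hc
  exact (h_bound t ht).trans (le_mul_exp_of_le_add_integral hc hy_cont hy_le t ht)

/-- Gronwall's lemma with a delayed time argument `δ s ≤ s`. -/
theorem stmt_0 (a c t₀ T : ℝ) (ha : 0 ≤ a) (hc : 0 ≤ c) (ht₀T : t₀ < T)
    (x δ : ℝ → ℝ)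
    (hx_meas : Measurable ((Set.Icc t₀ T).restrict x))
    (hδ_meas : Measurable ((Set.Icc t₀ T).restrict δ))
    (hx_nonneg : ∀ t ∈ Set.Icc t₀ T, 0 ≤ x t)
    (hδ_mem : ∀ t ∈ Set.Icc t₀ T, δ t ∈ Set.Icc t₀ T)
    (hδ_le : ∀ t ∈ Set.Icc t₀ T, δ t ≤ t)
    (h_int : ∀ t ∈ Set.Icc t₀ T,
      IntegrableOn (fun s => c * x (δ s)) (Set.Icc t₀ t) volume)
    (h_bound : ∀ t ∈ Set.Icc t₀ T,
      x t ≤ a + ∫ s in t₀..t, c * x (δ s)) :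
    ∀ t ∈ Set.Icc t₀ T, x t ≤ a * Real.exp (c * (t - t₀)) :=
  stmt_0_general a c t₀ T hc x δ hx_nonneg hδ_mem hδ_le h_int h_bound
end

section
/- Let $c\in[0,\infty)$, $p\in[1,\infty)$, $T\in\mathbb{R}$, $t_0\in(-\infty,T)$, and let $a,x\colon[t_0,T]\to[0,\infty)$ and $\delta\colon[t_0,T]\to[t_0,T]$ be measurable functions satisfying for all $t\in[t_0,T]$ that $\delta(t)\le t$ and $x(t)\le a(t)+\bigl(\int_{t_0}^t (c\,x(\delta(s)))^p\,ds\bigr)^{1/p}<\infty$. Then for all $t\in[t_0,T]$ it holds that $x(t)\le 2^{1-1/p}\,\bigl[\sup_{s\in[t_0,t]}a(s)\bigr]\,\exp\bigl(\tfrac{2^{p-1}c^p(t-t_0)}{p}\bigr)$. -/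
/-! Put `F u = ∫_{t₀}^u (c x(δ s))^p`. By `(u + v)^p ≤ 2^{p-1} (u^p + v^p)` the hypothesis gives
`x(s)^p ≤ 2^{p-1} (M^p + F s)`, and since `F` is monotone and `δ s ≤ s` the integrand of `F` at `s`
is at most `2^{p-1} c^p (M^p + F s)`. Thus `M^p + F` satisfies a linear integral inequality, and
Grönwall's lemma bounds it by `M^p exp (2^{p-1} c^p (t - t₀))`; take `p`-th roots. -/

open MeasureTheory Set

theorem Real.rpow_add_le_mul_rpow_add_rpow {u v p : ℝ} (hu : 0 ≤ u) (hv : 0 ≤ v) (hp : 1 ≤ p) :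
    (u + v) ^ p ≤ 2 ^ (p - 1) * (u ^ p + v ^ p) := by
  lift u to NNReal using hu
  lift v to NNReal using hv
  exact_mod_cast NNReal.rpow_add_le_mul_rpow_add_rpow u v hp

theorem Real.rpow_le_two_rpow_mul_of_le_add_rpow_inv {y u v p : ℝ} (hy : 0 ≤ y) (hu : 0 ≤ u)
    (hv : 0 ≤ v) (hp : 1 ≤ p) (h : y ≤ u + v ^ (1 / p)) :
    y ^ p ≤ 2 ^ (p - 1) * (u ^ p + v) :=
  calc y ^ p ≤ (u + v ^ (1 / p)) ^ p := by gcongr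
    _ ≤ 2 ^ (p - 1) * (u ^ p + (v ^ (1 / p)) ^ p) :=
      Real.rpow_add_le_mul_rpow_add_rpow hu (by positivity) hp
    _ = 2 ^ (p - 1) * (u ^ p + v) := by
      rw [← Real.rpow_mul hv, one_div_mul_cancel (by linarith), Real.rpow_one]

theorem add_mul_gronwallBound_zero_left (C K x : ℝ) :
    C + K * gronwallBound 0 K C x = C * Real.exp (K * x) := by
  rcases eq_or_ne K 0 with rfl | hK
  · simp
  · rw [gronwallBound_of_K_ne_0 hK]
    field_simp
    ring

theorem continuousOn_primitive_of_integrableOn_Icc {f : ℝ → ℝ} {a b : ℝ}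
    (hf : IntegrableOn f (Icc a b)) : ContinuousOn (fun u => ∫ s in a..u, f s) (Icc a b) := by
  rcases le_or_gt a b with hab | hba
  · rw [← uIcc_of_le hab] at hf ⊢
    exact intervalIntegral.continuousOn_primitive_interval hf
  · simp [Icc_eq_empty_of_lt hba]

theorem monotoneOn_primitive_of_nonneg {g : ℝ → ℝ} {a b : ℝ} (hg : IntegrableOn g (Icc a b))
    (hg0 : ∀ s ∈ Icc a b, 0 ≤ g s) : MonotoneOn (fun u => ∫ s in a..u, g s) (Icc a b) :=
  fun u hu v hv huv => intervalIntegral.integral_mono_interval le_rfl hu.1 huv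
    ((ae_restrict_iff' measurableSet_Ioc).2 <| .of_forall fun s hs =>
      hg0 s ⟨hs.1.le, hs.2.trans hv.2⟩)
    ((intervalIntegrable_iff_integrableOn_Icc_of_le hv.1).2
      (hg.mono_set (Icc_subset_Icc_right hv.2)))

/-- The differential Grönwall inequality applied to the primitive `u ↦ ∫ s in a..u, f s`. -/
theorem le_mul_exp_of_le_add_mul_integral {f : ℝ → ℝ} {a b C K : ℝ}
    (hf : ContinuousOn f (Icc a b)) (hK : 0 ≤ K)
    (hle : ∀ u ∈ Icc a b, f u ≤ C + K * ∫ s in a..u, f s) :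
    ∀ u ∈ Icc a b, f u ≤ C * Real.exp (K * (u - a)) := by
  have hfi : ∀ u ∈ Icc a b, IntervalIntegrable f volume a u := fun u hu =>
    (hf.mono (Icc_subset_Icc_right hu.2)).intervalIntegrable_of_Icc hu.1
  have hderiv : ∀ u ∈ Ico a b,
      HasDerivWithinAt (fun v => ∫ s in a..v, f s) (f u) (Ici u) u := by
    intro u hu
    have hnhds : Icc a b ∈ nhdsWithin u (Ioi u) := Icc_mem_nhdsGT_of_mem hu
    exact intervalIntegral.integral_hasDerivWithinAt_right (hfi u (Ico_subset_Icc_self hu))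
      ((hf.stronglyMeasurableAtFilter_nhdsWithin measurableSet_Icc u).filter_mono
        (nhdsWithin_le_of_mem hnhds))
      ((hf u (Ico_subset_Icc_self hu)).mono_of_mem_nhdsWithin hnhds)
  have hprim := le_gronwallBound_of_liminf_deriv_right_le
    (continuousOn_primitive_of_integrableOn_Icc hf.integrableOn_Icc)
    (fun u hu _ hr => (hderiv u hu).liminf_right_slope_le hr)
    (by simp : ∫ s in a..a, f s ≤ 0)
    (fun u hu => (hle u (Ico_subset_Icc_self hu)).trans_eq (add_comm _ _))
  intro u hu
  calc f u ≤ C + K * ∫ s in a..u, f s := hle u hu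
    _ ≤ C + K * gronwallBound 0 K C (u - a) := by gcongr; exact hprim u hu
    _ = C * Real.exp (K * (u - a)) := add_mul_gronwallBound_zero_left C K _

theorem add_integral_le_mul_exp_of_le_mul_add_integral {g : ℝ → ℝ} {a b C K : ℝ}
    (hg : IntegrableOn g (Icc a b)) (hK : 0 ≤ K)
    (hle : ∀ s ∈ Icc a b, g s ≤ K * (C + ∫ r in a..s, g r)) :
    ∀ u ∈ Icc a b, C + ∫ s in a..u, g s ≤ C * Real.exp (K * (u - a)) := by
  have hG : ContinuousOn (fun u => C + ∫ s in a..u, g s) (Icc a b) :=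
    continuousOn_const.add (continuousOn_primitive_of_integrableOn_Icc hg)
  refine le_mul_exp_of_le_add_mul_integral hG hK fun u hu => ?_
  have hau : Icc a u ⊆ Icc a b := Icc_subset_Icc_right hu.2
  rw [← intervalIntegral.integral_const_mul]
  gcongr
  exact intervalIntegral.integral_mono_on hu.1
    ((intervalIntegrable_iff_integrableOn_Icc_of_le hu.1).2 (hg.mono_set hau))
    ((hG.mono hau).intervalIntegrable_of_Icc hu.1 |>.const_mul K) fun s hs => hle s (hau hs)

theorem le_two_rpow_mul_mul_exp_of_rpow_le {y M z p : ℝ} (hy : 0 ≤ y) (hM : 0 ≤ M) (hp : 0 < p)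
    (h : y ^ p ≤ 2 ^ (p - 1) * (M ^ p * Real.exp z)) :
    y ≤ 2 ^ (1 - 1 / p) * M * Real.exp (z / p) := by
  have hrhs :
      (2 ^ (1 - 1 / p) * M * Real.exp (z / p)) ^ p = 2 ^ (p - 1) * (M ^ p * Real.exp z) := by
    rw [Real.mul_rpow (by positivity) (by positivity), Real.mul_rpow (by positivity) hM,
      ← Real.rpow_mul zero_le_two, ← Real.exp_mul, div_mul_cancel₀ z hp.ne',
      sub_mul, one_div_mul_cancel hp.ne', one_mul, mul_assoc]
  rwa [← hrhs, Real.rpow_le_rpow_iff hy (by positivity) hp] at h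

theorem stmt_1_general (c p t₀ T : ℝ) (hc : 0 ≤ c) (hp : 1 ≤ p)
    (a x δ : ℝ → ℝ)
    (ha_nonneg : ∀ t ∈ Set.Icc t₀ T, 0 ≤ a t)
    (hx_nonneg : ∀ t ∈ Set.Icc t₀ T, 0 ≤ x t)
    (hδ_mem : ∀ t ∈ Set.Icc t₀ T, δ t ∈ Set.Icc t₀ T)
    (hδ_le : ∀ t ∈ Set.Icc t₀ T, δ t ≤ t)
    (h_int : ∀ t ∈ Set.Icc t₀ T,
      IntegrableOn (fun s => (c * x (δ s)) ^ p) (Set.Icc t₀ t) volume)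
    (h_bound : ∀ t ∈ Set.Icc t₀ T,
      x t ≤ a t + (∫ s in t₀..t, (c * x (δ s)) ^ p) ^ (1 / p)) :
    ∀ t ∈ Set.Icc t₀ T, ∀ M : ℝ, (∀ s ∈ Set.Icc t₀ t, a s ≤ M) →
      x t ≤ 2 ^ (1 - 1 / p) * M * Real.exp (2 ^ (p - 1) * c ^ p * (t - t₀) / p) := by
  intro t ht M hM
  have htT : Icc t₀ t ⊆ Icc t₀ T := Icc_subset_Icc_right ht.2
  have hM0 : 0 ≤ M := (ha_nonneg t₀ (htT ⟨le_rfl, ht.1⟩)).trans (hM t₀ ⟨le_rfl, ht.1⟩)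
  set g : ℝ → ℝ := fun s => (c * x (δ s)) ^ p
  set F : ℝ → ℝ := fun u => ∫ s in t₀..u, g s
  have hg_nonneg : ∀ s ∈ Icc t₀ t, 0 ≤ g s := fun s hs =>
    Real.rpow_nonneg (mul_nonneg hc (hx_nonneg _ (hδ_mem s (htT hs)))) p
  have hF_nonneg : ∀ u ∈ Icc t₀ t, 0 ≤ F u := fun u hu =>
    intervalIntegral.integral_nonneg hu.1 fun s hs => hg_nonneg s ⟨hs.1, hs.2.trans hu.2⟩
  have hF_mono : MonotoneOn F (Icc t₀ t) := monotoneOn_primitive_of_nonneg (h_int t ht) hg_nonneg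
  have hx_pow_le : ∀ s ∈ Icc t₀ t, x s ^ p ≤ 2 ^ (p - 1) * (M ^ p + F s) := fun s hs =>
    Real.rpow_le_two_rpow_mul_of_le_add_rpow_inv (hx_nonneg s (htT hs)) hM0 (hF_nonneg s hs) hp
      ((h_bound s (htT hs)).trans (by gcongr; exact hM s hs))
  have hg_le : ∀ s ∈ Icc t₀ t, g s ≤ 2 ^ (p - 1) * c ^ p * (M ^ p + F s) := by
    intro s hs
    have hδs : δ s ∈ Icc t₀ t := ⟨(hδ_mem s (htT hs)).1, (hδ_le s (htT hs)).trans hs.2⟩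
    calc g s = c ^ p * x (δ s) ^ p := Real.mul_rpow hc (hx_nonneg _ (htT hδs))
      _ ≤ c ^ p * (2 ^ (p - 1) * (M ^ p + F (δ s))) := by gcongr; exact hx_pow_le _ hδs
      _ ≤ c ^ p * (2 ^ (p - 1) * (M ^ p + F s)) := by
        gcongr; exact hF_mono hδs hs (hδ_le s (htT hs))
      _ = 2 ^ (p - 1) * c ^ p * (M ^ p + F s) := by ring
  have hgronwall := add_integral_le_mul_exp_of_le_mul_add_integral (h_int t ht) (by positivity)
    hg_le t ⟨ht.1, le_rfl⟩
  exact le_two_rpow_mul_mul_exp_of_rpow_le (hx_nonneg t ht) hM0 (by linarith)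
    ((hx_pow_le t ⟨ht.1, le_rfl⟩).trans (by gcongr))

/-- An `L^p`-type Gronwall inequality with a delayed time argument `δ s ≤ s`. -/
theorem stmt_1 (c p t₀ T : ℝ) (hc : 0 ≤ c) (hp : 1 ≤ p) (ht₀T : t₀ < T)
    (a x δ : ℝ → ℝ)
    (ha_meas : Measurable ((Set.Icc t₀ T).restrict a))
    (hx_meas : Measurable ((Set.Icc t₀ T).restrict x))
    (hδ_meas : Measurable ((Set.Icc t₀ T).restrict δ))
    (ha_nonneg : ∀ t ∈ Set.Icc t₀ T, 0 ≤ a t)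
    (hx_nonneg : ∀ t ∈ Set.Icc t₀ T, 0 ≤ x t)
    (hδ_mem : ∀ t ∈ Set.Icc t₀ T, δ t ∈ Set.Icc t₀ T)
    (hδ_le : ∀ t ∈ Set.Icc t₀ T, δ t ≤ t)
    (h_int : ∀ t ∈ Set.Icc t₀ T,
      IntegrableOn (fun s => (c * x (δ s)) ^ p) (Set.Icc t₀ t) volume)
    (h_bound : ∀ t ∈ Set.Icc t₀ T,
      x t ≤ a t + (∫ s in t₀..t, (c * x (δ s)) ^ p) ^ (1 / p)) :
    ∀ t ∈ Set.Icc t₀ T, ∀ M : ℝ, (∀ s ∈ Set.Icc t₀ t, a s ≤ M) →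
      x t ≤ 2 ^ (1 - 1 / p) * M * Real.exp (2 ^ (p - 1) * c ^ p * (t - t₀) / p) :=
  stmt_1_general c p t₀ T hc hp a x δ ha_nonneg hx_nonneg hδ_mem hδ_le h_int h_bound
end

section
/- Let $d\in\mathbb{N}$, let $\lVert\cdot\rVert$ be the Euclidean norm on $\mathbb{R}^d$, let $p\in[3/2,\infty)$, $a,c\in[0,\infty)$, and define $V\colon\mathbb{R}^d\to\mathbb{R}$ by $V(x)=(a+c^2\lVert x\rVert^2)^p$. Then for all $x,y,z\in\mathbb{R}^d$ it holds that $\lvert (\mathrm{D}^2V(x))(y,z)\rvert \le 2p(2p-1)c^2\,(V(x))^{(p-1)/p}\lVert y\rVert\,\lVert z\rVert$. -/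
/-!
Write `g = a + b‖x‖²` and `V = g ^ p`. Where `g(x) > 0` the chain rule gives
`D²V(x)(y, z) = 2pb g^(p-1) ⟪y, z⟫ + 4p(p-1)b² g^(p-2) ⟪x, y⟫⟪x, z⟫`; Cauchy–Schwarz and
`b‖x‖² ≤ g` bound this by `(2p + 4p(p-1)) b g^(p-1) ‖y‖‖z‖`, and `g^(p-1) = V^((p-1)/p)`.
If `g(x) = 0` and `b > 0` then `a = 0` and `x = 0`, where `DV(w) = O(‖w‖^(2p-1)) = o(‖w‖)`
because `p > 1`, so `D²V(x) = 0`.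
-/

open Filter Topology Asymptotics

theorem hasFDerivAt_smul_zero_of_tendsto {E F : Type*} [NormedAddCommGroup E] [NormedSpace ℝ E]
    [NormedAddCommGroup F] [NormedSpace ℝ F] {φ : E → ℝ} (L : E →L[ℝ] F)
    (hφ : Tendsto φ (𝓝 0) (𝓝 0)) : HasFDerivAt (fun w => φ w • L w) (0 : E →L[ℝ] F) 0 := by
  rw [hasFDerivAt_iff_isLittleO_nhds_zero]
  simpa using ((isLittleO_one_iff ℝ).2 hφ).smul_isBigO (L.isBigO_id _)

section

variable {E : Type*} [NormedAddCommGroup E] [InnerProductSpace ℝ E] {a b p : ℝ}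

theorem hasFDerivAt_add_mul_norm_sq (a b : ℝ) (w : E) :
    HasFDerivAt (fun w : E => a + b * ‖w‖ ^ 2) ((2 * b) • innerSL ℝ w) w := by
  refine (((hasStrictFDerivAt_norm_sq w).hasFDerivAt.const_mul b).const_add a).congr_fderiv ?_
  ext v
  simp only [smul_apply, innerSL_apply_apply, smul_eq_mul, nsmul_eq_mul, Nat.cast_ofNat]
  ring

theorem hasFDerivAt_rpow_add_mul_norm_sq {q : ℝ} {w : E} (h : a + b * ‖w‖ ^ 2 ≠ 0 ∨ 1 ≤ q) :
    HasFDerivAt (fun w : E => (a + b * ‖w‖ ^ 2) ^ q)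
      ((2 * q * b * (a + b * ‖w‖ ^ 2) ^ (q - 1)) • innerSL ℝ w) w := by
  convert (hasFDerivAt_add_mul_norm_sq a b w).rpow_const h using 1
  rw [smul_smul]
  ring_nf

theorem fderiv_rpow_add_mul_norm_sq (hp : 1 ≤ p) :
    fderiv ℝ (fun w : E => (a + b * ‖w‖ ^ 2) ^ p) =
      fun w => (2 * p * b * (a + b * ‖w‖ ^ 2) ^ (p - 1)) • innerSL ℝ w :=
  funext fun _ => (hasFDerivAt_rpow_add_mul_norm_sq (Or.inr hp)).fderiv

theorem fderiv_fderiv_rpow_add_mul_norm_sq_apply (hp : 1 ≤ p) {x : E}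
    (hx : a + b * ‖x‖ ^ 2 ≠ 0) (y z : E) :
    fderiv ℝ (fderiv ℝ fun w : E => (a + b * ‖w‖ ^ 2) ^ p) x y z =
      2 * p * b * (a + b * ‖x‖ ^ 2) ^ (p - 1) * inner ℝ y z +
        4 * p * (p - 1) * b ^ 2 * (a + b * ‖x‖ ^ 2) ^ (p - 2) * inner ℝ x y * inner ℝ x z := by
  have hφ := (hasFDerivAt_rpow_add_mul_norm_sq (q := p - 1) (Or.inl hx)).const_mul (2 * p * b)
  rw [fderiv_rpow_add_mul_norm_sq hp, ← Pi.smul_def', (hφ.smul (innerSL ℝ).hasFDerivAt).fderiv]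
  simp only [add_apply, smul_apply, ContinuousLinearMap.smulRight_apply, smul_eq_mul]
  rw [innerSL_apply_apply, innerSL_apply_apply, innerSL_apply_apply, show p - 1 - 1 = p - 2 by ring]
  ring

theorem fderiv_fderiv_rpow_add_mul_norm_sq_of_eq_zero (hp : 1 < p) (ha : 0 ≤ a) (hb : 0 ≤ b)
    {x : E} (hx : a + b * ‖x‖ ^ 2 = 0) :
    fderiv ℝ (fderiv ℝ fun w : E => (a + b * ‖w‖ ^ 2) ^ p) x = 0 := by
  rw [fderiv_rpow_add_mul_norm_sq hp.le]
  obtain rfl | hb := hb.eq_or_lt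
  · simp
  have ha0 : a = 0 := by nlinarith [sq_nonneg ‖x‖]
  have hx0 : x = 0 := by
    subst ha0
    simpa [hb.ne'] using hx
  subst ha0 hx0
  refine (hasFDerivAt_smul_zero_of_tendsto _ ?_).fderiv
  have : ContinuousAt (fun w : E => 2 * p * b * (0 + b * ‖w‖ ^ 2) ^ (p - 1)) 0 := by
    fun_prop (disch := linarith)
  simpa [Real.zero_rpow (by linarith : p - 1 ≠ 0)] using this.tendsto

theorem abs_mul_inner_add_mul_inner_mul_inner_le {A B : ℝ} (hA : 0 ≤ A) (hB : 0 ≤ B)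
    (x y z : E) :
    |A * inner ℝ y z + B * inner ℝ x y * inner ℝ x z| ≤ (A + B * ‖x‖ ^ 2) * ‖y‖ * ‖z‖ := by
  calc _ ≤ A * |inner ℝ y z| + B * (|inner ℝ x y| * |inner ℝ x z|) := by
        grw [abs_add_le, abs_mul, abs_mul, abs_mul, abs_of_nonneg hA, abs_of_nonneg hB, mul_assoc]
    _ ≤ A * (‖y‖ * ‖z‖) + B * ((‖x‖ * ‖y‖) * (‖x‖ * ‖z‖)) := by
        gcongr <;> exact abs_real_inner_le_norm _ _
    _ = _ := by ring

theorem abs_fderiv_fderiv_rpow_add_mul_norm_sq_le (hp : 1 < p) (ha : 0 ≤ a) (hb : 0 ≤ b)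
    (x y z : E) :
    |fderiv ℝ (fderiv ℝ fun w : E => (a + b * ‖w‖ ^ 2) ^ p) x y z| ≤
      2 * p * (2 * p - 1) * b * ((a + b * ‖x‖ ^ 2) ^ p) ^ ((p - 1) / p) * ‖y‖ * ‖z‖ := by
  have hp0 : 0 ≤ p := by linarith
  have hp1 : 0 ≤ p - 1 := by linarith
  have hg : 0 ≤ a + b * ‖x‖ ^ 2 := by positivity
  obtain hg0 | hgpos := hg.eq_or_lt
  · rw [fderiv_fderiv_rpow_add_mul_norm_sq_of_eq_zero hp ha hb hg0.symm, zero_apply, zero_apply,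
      abs_zero]
    have h2p : 0 ≤ 2 * p - 1 := by linarith
    positivity
  set g := a + b * ‖x‖ ^ 2
  rw [fderiv_fderiv_rpow_add_mul_norm_sq_apply hp.le hgpos.ne', ← Real.rpow_mul hg,
    mul_div_cancel₀ _ (by linarith : p ≠ 0)]
  have hpow : g ^ (p - 2) * g = g ^ (p - 1) := by
    rw [← Real.rpow_add_one hgpos.ne']
    ring_nf
  calc _ ≤ (2 * p * b * g ^ (p - 1) + 4 * p * (p - 1) * b ^ 2 * g ^ (p - 2) * ‖x‖ ^ 2)
        * ‖y‖ * ‖z‖ :=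
        abs_mul_inner_add_mul_inner_mul_inner_le (by positivity) (by positivity) x y z
    _ = (2 * p * b * g ^ (p - 1) + 4 * p * (p - 1) * b * g ^ (p - 2) * (b * ‖x‖ ^ 2))
        * ‖y‖ * ‖z‖ := by ring
    _ ≤ (2 * p * b * g ^ (p - 1) + 4 * p * (p - 1) * b * g ^ (p - 2) * g) * ‖y‖ * ‖z‖ := by
        gcongr
        linarith
    _ = _ := by rw [mul_assoc _ _ g, hpow]; ring

end

theorem stmt_3_general (d : ℕ) (p a c : ℝ) (hp : 3 / 2 ≤ p) (ha : 0 ≤ a)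
    (V : EuclideanSpace ℝ (Fin d) → ℝ)
    (hV : ∀ x, V x = (a + c ^ 2 * ‖x‖ ^ 2) ^ p) :
    ∀ x y z : EuclideanSpace ℝ (Fin d),
      |fderiv ℝ (fderiv ℝ V) x y z| ≤
        2 * p * (2 * p - 1) * c ^ 2 * (V x) ^ ((p - 1) / p) * ‖y‖ * ‖z‖ := by
  obtain rfl : V = fun w => (a + c ^ 2 * ‖w‖ ^ 2) ^ p := funext hV
  exact abs_fderiv_fderiv_rpow_add_mul_norm_sq_le (by linarith) ha (sq_nonneg c)

/-- Second-derivative bound for the Lyapunov function `V x = (a + c² ‖x‖²) ^ p`. -/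
theorem stmt_3 (d : ℕ) (hd : 0 < d) (p a c : ℝ) (hp : 3 / 2 ≤ p) (ha : 0 ≤ a) (hc : 0 ≤ c)
    (V : EuclideanSpace ℝ (Fin d) → ℝ)
    (hV : ∀ x, V x = (a + c ^ 2 * ‖x‖ ^ 2) ^ p) :
    ∀ x y z : EuclideanSpace ℝ (Fin d),
      |fderiv ℝ (fderiv ℝ V) x y z| ≤
        2 * p * (2 * p - 1) * c ^ 2 * (V x) ^ ((p - 1) / p) * ‖y‖ * ‖z‖ :=
  stmt_3_general d p a c hp ha V hV
end

section
/- Let $d\in\mathbb{N}$, $p\in[2,\infty)$, $\bar{c}\in(0,\infty)$, let $\lVert\cdot\rVert$ denote Euclidean/Frobenius norms, let $V\in C^2(\mathbb{R}^d,[1,\infty))$ satisfy for all $x,y\in\mathbb{R}^d$ that $\lvert(\mathrm{D}V(x))(y)\rvert\le\bar{c}(V(x))^{(p-1)/p}\lVert y\rVert$ and $\lvert(\mathrm{D}^2V(x))(y,y)\rvert\le\bar{c}(V(x))^{(p-2)/p}\lVert y\rVert^2$, and let $\mu\colon\mathbb{R}^d\to\mathbb{R}^d$, $\sigma=(\sigma_1,\dots,\sigma_m)\colon\mathbb{R}^d\to\mathbb{R}^{d\times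 m}$ satisfy $\max\{\lVert\mu(x)\rVert,\lVert\sigma(x)\rVert\}\le (V(x))^{1/p}$ for all $x$. Then for all $x,y\in\mathbb{R}^d$ it holds that $\lvert(\mathrm{D}V(y))(\mu(x))\rvert+\tfrac12\bigl\lvert\sum_{k=1}^m(\mathrm{D}^2V(y))(\sigma_k(x),\sigma_k(x))\bigr\rvert \le \bigl(1.5\bar{c}-\tfrac{2\bar{c}}{p}\bigr)V(y)+\tfrac{2\bar{c}}{p}V(x)$. -/
open Finset

/-!
Both terms are bounded by `cbar * V y ^ ((p - k) / p) * V x ^ (k / p)`, with `k = 1` for the drift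
term (first-derivative bound and `‖μ x‖ ≤ V x ^ (1 / p)`) and `k = 2` for the diffusion term
(second-derivative bound and `∑ k, ‖σ x k‖ ^ 2 ≤ V x ^ (2 / p)`). Weighted Young's inequality with
weights `(p - k) / p` and `k / p` turns each product into a convex combination of `V y` and `V x`.
-/

theorem Real.rpow_sub_div_mul_rpow_div_le {a b p k : ℝ} (ha : 0 ≤ a) (hb : 0 ≤ b) (hp : 0 < p)
    (hk : 0 ≤ k) (hkp : k ≤ p) :
    a ^ ((p - k) / p) * b ^ (k / p) ≤ (p - k) / p * a + k / p * b :=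
  Real.geom_mean_le_arith_mean2_weighted (div_nonneg (sub_nonneg.2 hkp) hp.le)
    (div_nonneg hk hp.le) ha hb (by field_simp; ring)

theorem Real.le_rpow_two_div_of_sqrt_le_rpow_one_div {s b p : ℝ} (hb : 0 ≤ b)
    (h : √s ≤ b ^ (1 / p)) : s ≤ b ^ (2 / p) := by
  have h2 : b ^ (2 / p) = (b ^ (1 / p)) ^ 2 := by
    rw [← Real.rpow_mul_natCast hb]
    ring_nf
  rw [h2]
  exact (Real.sqrt_le_left (Real.rpow_nonneg hb _)).1 h

theorem abs_sum_le_mul_sum_norm_sq {ι E : Type*} [Fintype ι] [Norm E] (Q : E → ℝ) {C : ℝ}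
    (hQ : ∀ v, |Q v| ≤ C * ‖v‖ ^ 2) (w : ι → E) :
    |∑ k, Q (w k)| ≤ C * ∑ k, ‖w k‖ ^ 2 :=
  calc |∑ k, Q (w k)| ≤ ∑ k, |Q (w k)| := abs_sum_le_sum_abs _ _
    _ ≤ ∑ k, C * ‖w k‖ ^ 2 := sum_le_sum fun k _ => hQ (w k)
    _ = C * ∑ k, ‖w k‖ ^ 2 := (mul_sum _ _ _).symm

/-- `σ x k` is the `k`-th column of the diffusion matrix, so `√(∑ k, ‖σ x k‖ ^ 2)` is its
Frobenius norm. -/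
theorem stmt_7_general (d m : ℕ) (p cbar : ℝ)
    (hp : 2 ≤ p) (hcbar : 0 < cbar)
    (V : EuclideanSpace ℝ (Fin d) → ℝ)
    (hV1 : ∀ x, 1 ≤ V x)
    (hDV : ∀ x y : EuclideanSpace ℝ (Fin d),
      |fderiv ℝ V x y| ≤ cbar * (V x) ^ ((p - 1) / p) * ‖y‖)
    (hD2V : ∀ x y : EuclideanSpace ℝ (Fin d),
      |fderiv ℝ (fderiv ℝ V) x y y| ≤ cbar * (V x) ^ ((p - 2) / p) * ‖y‖ ^ 2)
    (μ : EuclideanSpace ℝ (Fin d) → EuclideanSpace ℝ (Fin d))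
    (σ : EuclideanSpace ℝ (Fin d) → Fin m → EuclideanSpace ℝ (Fin d))
    (hgrowth : ∀ x, max ‖μ x‖ (Real.sqrt (∑ k, ‖σ x k‖ ^ 2)) ≤ (V x) ^ (1 / p)) :
    ∀ x y : EuclideanSpace ℝ (Fin d),
      |fderiv ℝ V y (μ x)| + 1 / 2 * |∑ k, fderiv ℝ (fderiv ℝ V) y (σ x k) (σ x k)| ≤
        (1.5 * cbar - 2 * cbar / p) * V y + (2 * cbar / p) * V x := by
  intro x y
  have hp0 : 0 < p := by linarith
  have hVx : 0 ≤ V x := zero_le_one.trans (hV1 x)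
  have hVy : 0 ≤ V y := zero_le_one.trans (hV1 y)
  have hdrift : |fderiv ℝ V y (μ x)| ≤ cbar * ((p - 1) / p * V y + 1 / p * V x) :=
    calc |fderiv ℝ V y (μ x)| ≤ cbar * V y ^ ((p - 1) / p) * ‖μ x‖ := hDV y (μ x)
      _ ≤ cbar * V y ^ ((p - 1) / p) * V x ^ (1 / p) := by
        gcongr; exact (le_max_left _ _).trans (hgrowth x)
      _ ≤ cbar * ((p - 1) / p * V y + 1 / p * V x) := by
        rw [mul_assoc]; gcongr
        exact Real.rpow_sub_div_mul_rpow_div_le hVy hVx hp0 zero_le_one (by linarith)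
  have hdiffusion : |∑ k, fderiv ℝ (fderiv ℝ V) y (σ x k) (σ x k)| ≤
      cbar * ((p - 2) / p * V y + 2 / p * V x) :=
    calc |∑ k, fderiv ℝ (fderiv ℝ V) y (σ x k) (σ x k)|
        ≤ cbar * V y ^ ((p - 2) / p) * ∑ k, ‖σ x k‖ ^ 2 :=
          abs_sum_le_mul_sum_norm_sq (fun v => fderiv ℝ (fderiv ℝ V) y v v) (hD2V y) (σ x)
      _ ≤ cbar * V y ^ ((p - 2) / p) * V x ^ (2 / p) := by
        gcongr
        exact Real.le_rpow_two_div_of_sqrt_le_rpow_one_div hVx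
          ((le_max_right _ _).trans (hgrowth x))
      _ ≤ cbar * ((p - 2) / p * V y + 2 / p * V x) := by
        rw [mul_assoc]; gcongr
        exact Real.rpow_sub_div_mul_rpow_div_le hVy hVx hp0 zero_le_two hp
  calc _ ≤ cbar * ((p - 1) / p * V y + 1 / p * V x)
          + 1 / 2 * (cbar * ((p - 2) / p * V y + 2 / p * V x)) := by gcongr
    _ = (1.5 * cbar - 2 * cbar / p) * V y + (2 * cbar / p) * V x := by field_simp; ring

/-- Generator-type bound for the Lyapunov function `V`. Here `σ x k` denotes the
`k`-th column of the diffusion matrix, so that `∑ k, ‖σ x k‖²` is the squared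
Frobenius norm of `σ x`. -/
theorem stmt_7 (d m : ℕ) (hd : 0 < d) (hm : 0 < m) (p cbar : ℝ)
    (hp : 2 ≤ p) (hcbar : 0 < cbar)
    (V : EuclideanSpace ℝ (Fin d) → ℝ) (hV : ContDiff ℝ 2 V)
    (hV1 : ∀ x, 1 ≤ V x)
    (hDV : ∀ x y : EuclideanSpace ℝ (Fin d),
      |fderiv ℝ V x y| ≤ cbar * (V x) ^ ((p - 1) / p) * ‖y‖)
    (hD2V : ∀ x y : EuclideanSpace ℝ (Fin d),
      |fderiv ℝ (fderiv ℝ V) x y y| ≤ cbar * (V x) ^ ((p - 2) / p) * ‖y‖ ^ 2)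
    (μ : EuclideanSpace ℝ (Fin d) → EuclideanSpace ℝ (Fin d))
    (σ : EuclideanSpace ℝ (Fin d) → Fin m → EuclideanSpace ℝ (Fin d))
    (hgrowth : ∀ x, max ‖μ x‖ (Real.sqrt (∑ k, ‖σ x k‖ ^ 2)) ≤ (V x) ^ (1 / p)) :
    ∀ x y : EuclideanSpace ℝ (Fin d),
      |fderiv ℝ V y (μ x)| + 1 / 2 * |∑ k, fderiv ℝ (fderiv ℝ V) y (σ x k) (σ x k)| ≤
        (1.5 * cbar - 2 * cbar / p) * V y + (2 * cbar / p) * V x :=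
  stmt_7_general d m p cbar hp hcbar V hV1 hDV hD2V μ σ hgrowth
end
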